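/- Let N ≥ 1, M > 0, x, y ∈ ℝ^N with all components in [0, M], let 0 < δ < M, let F : K_x → K_y satisfy |d²(p,q) − d²(F(p), F(q))| ≤ 2δ for all p, q ∈ K_x, and let σ, τ : {1,…,N} → {1,…,N} satisfy F(□(n)) ⊆ □(σ(n)) and F(p_n^+(x)), F(p_n^−(x)) ∈ {p_{τ(n)}^+(y), p_{τ(n)}^−(y)} for all n. Then σ and τ are both the identity map on {1,…,N}. -/

import Mathlib

/-!
The points of `K_z` sit in slots along the horizontal axis: `p_n^±` lie within `M` of
`(10Mn, 0)` (slot `2n`) and `□(n)` is the `M`-ball around `(10Mn + 5M, 0)` (slot `2n+1`), the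
centres of slots `s` and `t` being `5M|s - t|` apart. A `2δ`-isometry with `δ < M` therefore
distorts slot distances by less than `6M`; since `F` sends points to points and squares to
squares it also preserves the parity of slots, and so it preserves slot distances exactly. The
induced map on slots `{0, …, 2N-1}` is then an isometry, hence the identity or the reflection
`s ↦ 2N-1-s`, and the reflection exchanges the parities.
-/

noncomputable def box (M : ℝ) (n : ℕ) : Set (ℝ × ℝ) :=
  Set.Icc (4 * M + 10 * M * (n : ℝ)) (4 * M + 10 * M * (n : ℝ) + 2 * M) ×ˢ Set.Icc (-M) M

noncomputable def pp {N : ℕ} (M : ℝ) (z : Fin N → ℝ) (n : Fin N) : ℝ × ℝ :=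
  (10 * M * ((n : ℕ) : ℝ), z n)

noncomputable def pm {N : ℕ} (M : ℝ) (z : Fin N → ℝ) (n : Fin N) : ℝ × ℝ :=
  (10 * M * ((n : ℕ) : ℝ), -(z n))

noncomputable def Kset {N : ℕ} (M : ℝ) (z : Fin N → ℝ) : Set (ℝ × ℝ) :=
  ⋃ n : Fin N, ({pp M z n, pm M z n} ∪ box M n)

theorem pp_mem {N : ℕ} (M : ℝ) (z : Fin N → ℝ) (n : Fin N) : pp M z n ∈ Kset M z :=
  Set.mem_iUnion.mpr ⟨n, Or.inl (Set.mem_insert _ _)⟩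

theorem pm_mem {N : ℕ} (M : ℝ) (z : Fin N → ℝ) (n : Fin N) : pm M z n ∈ Kset M z :=
  Set.mem_iUnion.mpr ⟨n, Or.inl (Set.mem_insert_of_mem _ rfl)⟩

theorem Kset_compact {N : ℕ} (M : ℝ) (z : Fin N → ℝ) : IsCompact (Kset M z) := by
  apply isCompact_iUnion
  intro n
  exact ((Set.toFinite _).isCompact).union (isCompact_Icc.prod isCompact_Icc)

instance {N : ℕ} (M : ℝ) (z : Fin N → ℝ) : CompactSpace ↥(Kset M z) :=
  isCompact_iff_compactSpace.mp (Kset_compact M z)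

theorem Kset_nonempty {N : ℕ} (hN : 0 < N) (M : ℝ) (z : Fin N → ℝ) : (Kset M z).Nonempty :=
  ⟨pp M z ⟨0, hN⟩, pp_mem M z ⟨0, hN⟩⟩

open Metric

noncomputable def slotCenter (M : ℝ) (s : ℤ) : ℝ × ℝ := (5 * M * s, 0)

lemma dist_slotCenter {M : ℝ} (hM : 0 ≤ M) (s t : ℤ) :
    dist (slotCenter M s) (slotCenter M t) = 5 * M * |(s : ℝ) - t| := by
  simp only [slotCenter, Prod.dist_eq, Real.dist_eq, sub_self, abs_zero]
  rw [max_eq_left (abs_nonneg _), ← mul_sub, abs_mul,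
    abs_of_nonneg (by positivity : (0 : ℝ) ≤ 5 * M)]

lemma box_eq_closedBall (M : ℝ) (n : ℕ) :
    box M n = closedBall (slotCenter M (2 * n + 1)) M := by
  rw [slotCenter, ← closedBall_prod_same, Real.closedBall_eq_Icc, Real.closedBall_eq_Icc, box]
  push_cast
  congr 2 <;> ring

lemma mk_mem_closedBall_slotCenter {M v : ℝ} (n : ℕ) (h : |v| ≤ M) :
    ((10 * M * n, v) : ℝ × ℝ) ∈ closedBall (slotCenter M (2 * n)) M := by
  rw [mem_closedBall, Prod.dist_eq, Real.dist_eq, Real.dist_eq, slotCenter]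
  push_cast
  simpa [show 10 * M * (n : ℝ) - 5 * M * (2 * n) = 0 by ring] using h

lemma abs_sub_eq_of_abs_dist_sub_le {M δ : ℝ} (hδM : δ < M) {s t s' t' : ℤ}
    (hs : s ≡ s' [ZMOD 2]) (ht : t ≡ t' [ZMOD 2]) {p q p' q' : ℝ × ℝ}
    (hp : p ∈ closedBall (slotCenter M s) M) (hq : q ∈ closedBall (slotCenter M t) M)
    (hp' : p' ∈ closedBall (slotCenter M s') M) (hq' : q' ∈ closedBall (slotCenter M t') M)
    (h : |dist p q - dist p' q'| ≤ 2 * δ) :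
    |s - t| = |s' - t'| := by
  have hM : 0 < M := by linarith [abs_nonneg (dist p q - dist p' q')]
  have e := dist_dist_dist_le p q (slotCenter M s) (slotCenter M t)
  have e' := dist_dist_dist_le p' q' (slotCenter M s') (slotCenter M t')
  rw [dist_slotCenter hM.le, Real.dist_eq] at e e'
  rw [mem_closedBall] at hp hq hp' hq'
  have hclose : abs (5 * M * |(s : ℝ) - t| - 5 * M * |(s' : ℝ) - t'|) < 5 * M * 2 := by
    rw [abs_le] at h e e'
    rw [abs_lt]
    constructor <;> linarith
  rw [← mul_sub, abs_mul, abs_of_pos (by positivity : (0 : ℝ) < 5 * M)] at hclose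
  have hlt : |(|s - t| - |s' - t'| : ℤ)| < 2 := by
    exact_mod_cast lt_of_mul_lt_mul_left hclose (by positivity)
  rw [Int.ModEq] at hs ht
  rw [abs_lt] at hlt
  rcases abs_cases (s - t) with ⟨h1, -⟩ | ⟨h1, -⟩ <;>
    rcases abs_cases (s' - t') with ⟨h2, -⟩ | ⟨h2, -⟩ <;> omega

theorem eq_id_of_slot_isometry {N : ℕ} {σ τ : Fin N → Fin N}
    (hσ : ∀ n m : Fin N, |(2 * n + 1 : ℤ) - (2 * m + 1)| = |(2 * σ n + 1 : ℤ) - (2 * σ m + 1)|)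
    (hτ : ∀ n m : Fin N, |(2 * n : ℤ) - 2 * m| = |(2 * τ n : ℤ) - 2 * τ m|)
    (hστ : ∀ n m : Fin N, |(2 * n : ℤ) - (2 * m + 1)| = |(2 * τ n : ℤ) - (2 * σ m + 1)|) :
    σ = id ∧ τ = id := by
  suffices h : ∀ n, σ n = n ∧ τ n = n from ⟨funext fun n => (h n).1, funext fun n => (h n).2⟩
  intro n
  have hN := n.pos
  let first : Fin N := ⟨0, hN⟩
  let last : Fin N := ⟨N - 1, by omega⟩
  have h1 := hσ n first
  have h2 := hσ last first
  have h3 := hτ n first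
  -- `h4` forces `τ first = 0` and `σ last = N - 1`, and then `h2` forces `σ first = 0`.
  have h4 := hστ first last
  simp only [abs_eq_abs, Fin.ext_iff] at *
  have := (σ n).isLt; have := (τ n).isLt; have := (σ first).isLt; have := (τ first).isLt
  have := (σ last).isLt
  simp only [first, last] at *
  omega

theorem step7_sigma_tau_id_general {N : ℕ} {M : ℝ} (hM : 0 < M)
    (x y : Fin N → ℝ) (hx : ∀ n, x n ∈ Set.Icc (0 : ℝ) M) (hy : ∀ n, y n ∈ Set.Icc (0 : ℝ) M)
    {δ : ℝ} (hδM : δ < M)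
    (F : ↥(Kset M x) → ↥(Kset M y))
    (hF : ∀ p q : ↥(Kset M x), |dist p q - dist (F p) (F q)| ≤ 2 * δ)
    (σ : Fin N → Fin N)
    (hσ : ∀ n : Fin N, ∀ p : ↥(Kset M x),
      (p : ℝ × ℝ) ∈ box M n → (F p : ℝ × ℝ) ∈ box M (σ n))
    (τ : Fin N → Fin N)
    (hτ : ∀ n : Fin N,
      (F ⟨pp M x n, pp_mem M x n⟩ : ℝ × ℝ) ∈ ({pp M y (τ n), pm M y (τ n)} : Set (ℝ × ℝ)) ∧
      (F ⟨pm M x n, pm_mem M x n⟩ : ℝ × ℝ) ∈ ({pp M y (τ n), pm M y (τ n)} : Set (ℝ × ℝ))) :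
    σ = id ∧ τ = id := by
  have habs : ∀ {z : Fin N → ℝ}, (∀ n, z n ∈ Set.Icc (0 : ℝ) M) → ∀ n, |z n| ≤ M :=
    fun hz n => abs_le.2 ⟨by linarith [(hz n).1], (hz n).2⟩
  let B (n : Fin N) : Kset M x :=
    ⟨slotCenter M (2 * n + 1), Set.mem_iUnion.2 ⟨n, Or.inr
      (box_eq_closedBall M n ▸ mem_closedBall_self hM.le)⟩⟩
  let P (n : Fin N) : Kset M x := ⟨pp M x n, pp_mem M x n⟩
  have hB (n : Fin N) : (B n : ℝ × ℝ) ∈ closedBall (slotCenter M (2 * n + 1)) M :=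
    mem_closedBall_self hM.le
  have hFB (n : Fin N) : (F (B n) : ℝ × ℝ) ∈ closedBall (slotCenter M (2 * σ n + 1)) M := by
    simpa only [box_eq_closedBall] using hσ n (B n) (by simpa only [box_eq_closedBall] using hB n)
  have hP (n : Fin N) : (P n : ℝ × ℝ) ∈ closedBall (slotCenter M (2 * n)) M :=
    mk_mem_closedBall_slotCenter n (habs hx n)
  have hFP (n : Fin N) : (F (P n) : ℝ × ℝ) ∈ closedBall (slotCenter M (2 * τ n)) M := by
    rcases (hτ n).1 with h | h
    · exact h ▸ mk_mem_closedBall_slotCenter _ (habs hy _)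
    · exact h ▸ mk_mem_closedBall_slotCenter _ ((abs_neg _).trans_le (habs hy _))
  have hodd (a b : ℕ) : (2 * a + 1 : ℤ) ≡ 2 * b + 1 [ZMOD 2] := by unfold Int.ModEq; omega
  have heven (a b : ℕ) : (2 * a : ℤ) ≡ 2 * b [ZMOD 2] := by unfold Int.ModEq; omega
  refine eq_id_of_slot_isometry (fun n m => ?_) (fun n m => ?_) (fun n m => ?_)
  · exact abs_sub_eq_of_abs_dist_sub_le hδM (hodd _ _) (hodd _ _) (hB n) (hB m) (hFB n) (hFB m)
      (hF (B n) (B m))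
  · exact abs_sub_eq_of_abs_dist_sub_le hδM (heven _ _) (heven _ _) (hP n) (hP m) (hFP n) (hFP m)
      (hF (P n) (P m))
  · exact abs_sub_eq_of_abs_dist_sub_le hδM (heven _ _) (hodd _ _) (hP n) (hB m) (hFP n) (hFB m)
      (hF (P n) (B m))

/-- Step 7: σ and τ are both the identity map. -/
theorem step7_sigma_tau_id {N : ℕ} (hN : 0 < N) {M : ℝ} (hM : 0 < M)
    (x y : Fin N → ℝ) (hx : ∀ n, x n ∈ Set.Icc (0 : ℝ) M) (hy : ∀ n, y n ∈ Set.Icc (0 : ℝ) M)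
    {δ : ℝ} (hδ0 : 0 < δ) (hδM : δ < M)
    (F : ↥(Kset M x) → ↥(Kset M y))
    (hF : ∀ p q : ↥(Kset M x), |dist p q - dist (F p) (F q)| ≤ 2 * δ)
    (σ : Fin N → Fin N)
    (hσ : ∀ n : Fin N, ∀ p : ↥(Kset M x),
      (p : ℝ × ℝ) ∈ box M n → (F p : ℝ × ℝ) ∈ box M (σ n))
    (τ : Fin N → Fin N)
    (hτ : ∀ n : Fin N,
      (F ⟨pp M x n, pp_mem M x n⟩ : ℝ × ℝ) ∈ ({pp M y (τ n), pm M y (τ n)} : Set (ℝ × ℝ)) ∧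
      (F ⟨pm M x n, pm_mem M x n⟩ : ℝ × ℝ) ∈ ({pp M y (τ n), pm M y (τ n)} : Set (ℝ × ℝ))) :
    σ = id ∧ τ = id :=
  step7_sigma_tau_id_general hM x y hx hy hδM F hF σ hσ τ hτ
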